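/- arXiv:1611.02314 — 3 statements merged into one kernel-verified Lean document; each statement's English description precedes it below -/
import Mathlib

section
/- Let A ∈ {-1,1}, H a covariate, R an integrable reward, and π(a,h) = P(A=a|H=h) bounded away from 0 and 1. Define the value of a rule D by V(D) = E[ R · 1{A = D(H)} / π(A,H) ]. Then V(D) = E[ E[R | A=1, H] · 1{D(H)=1} + E[R | A=-1, H] · 1{D(H)=-1} ], and consequently the rule D*(h) = sign( E[R|A=1,H=h] − E[R|A=-1,H=h] ) maximizes V(D) over all measurable rules D: range(H) → {-1,1}. -/
open MeasureTheory

/-- Pull-out: for integrable f and bounded m-measurable φ, `∫ φ·f = ∫ φ·E[f|m]`. -/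
lemma my_integral_mul_condexp {Ω : Type*} [m0 : MeasurableSpace Ω] {μ : Measure Ω}
    [IsFiniteMeasure μ] {m : MeasurableSpace Ω} (hm : m ≤ m0)
    {f φ : Ω → ℝ} (hf : Integrable f μ) (hφ : Measurable[m] φ)
    {C : ℝ} (hC : ∀ ω, ‖φ ω‖ ≤ C) :
    ∫ ω, φ ω * f ω ∂μ = ∫ ω, φ ω * (μ[f|m]) ω ∂μ := by
  have hφ0 : Measurable[m0] φ := fun s hs => hm _ (hφ hs)
  have hφsm : AEStronglyMeasurable[m0] φ μ := hφ0.aestronglyMeasurable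
  have hφf : Integrable (φ * f) μ := hf.bdd_mul hφsm (Filter.Eventually.of_forall hC)
  have h1 := condExp_mul_of_stronglyMeasurable_left hφ.stronglyMeasurable hφf hf
  calc ∫ ω, φ ω * f ω ∂μ = ∫ ω, (φ * f) ω ∂μ := rfl
    _ = ∫ ω, (μ[φ * f|m]) ω ∂μ := (integral_condExp hm).symm
    _ = ∫ ω, (φ * μ[f|m]) ω ∂μ := integral_congr_ae h1
    _ = ∫ ω, φ ω * (μ[f|m]) ω ∂μ := rfl

/-- With V(D) = E[R·1{A=D(H)}/π(A,H)], one has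
V(D) = E[E[R|A=1,H]·1{D(H)=1} + E[R|A=-1,H]·1{D(H)=-1}], and the rule
D*(h) = sign(E[R|A=1,H=h] − E[R|A=-1,H=h]) maximizes V over measurable ±1 rules.
Here m = σ(H); g1, gm1 are m-measurable versions of E[R|A=±1,H], characterized by
E[R·1{A=a}|H] = g_a·π_a. -/
theorem stmt1
    {Ω : Type*} (m : MeasurableSpace Ω) [m0 : MeasurableSpace Ω] {μ : Measure Ω} [IsProbabilityMeasure μ]
    (hm : m ≤ m0)
    (A : Ω → ℝ) (hA : Measurable A) (hAvals : ∀ ω, A ω = 1 ∨ A ω = -1)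
    (R : Ω → ℝ) (hR : Measurable R) (hRint : Integrable R μ)
    (π1 πm1 : Ω → ℝ) (hπ1 : Measurable[m] π1) (hπm1 : Measurable[m] πm1)
    (c0 c1 : ℝ) (hc0 : 0 < c0) (hc1 : c1 < 1)
    (hb1 : ∀ ω, c0 ≤ π1 ω ∧ π1 ω ≤ c1) (hbm1 : ∀ ω, c0 ≤ πm1 ω ∧ πm1 ω ≤ c1)
    (hcond1 : μ[(fun ω => if A ω = 1 then (1 : ℝ) else 0) | m] =ᵐ[μ] π1)
    (hcondm1 : μ[(fun ω => if A ω = -1 then (1 : ℝ) else 0) | m] =ᵐ[μ] πm1)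
    (g1 gm1 : Ω → ℝ) (hg1 : Measurable[m] g1) (hgm1 : Measurable[m] gm1)
    (hg1cond : μ[(fun ω => R ω * (if A ω = 1 then (1 : ℝ) else 0)) | m]
        =ᵐ[μ] (fun ω => g1 ω * π1 ω))
    (hgm1cond : μ[(fun ω => R ω * (if A ω = -1 then (1 : ℝ) else 0)) | m]
        =ᵐ[μ] (fun ω => gm1 ω * πm1 ω)) :
    (∀ D : Ω → ℝ, Measurable[m] D → (∀ ω, D ω = 1 ∨ D ω = -1) →
      (∫ ω, R ω * (if A ω = D ω then (1 : ℝ) else 0) /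
          (if A ω = 1 then π1 ω else πm1 ω) ∂μ)
        = ∫ ω, (g1 ω * (if D ω = 1 then (1 : ℝ) else 0)
            + gm1 ω * (if D ω = -1 then (1 : ℝ) else 0)) ∂μ) ∧
    (∀ D : Ω → ℝ, Measurable[m] D → (∀ ω, D ω = 1 ∨ D ω = -1) →
      (∫ ω, R ω * (if A ω = D ω then (1 : ℝ) else 0) /
          (if A ω = 1 then π1 ω else πm1 ω) ∂μ)
        ≤ ∫ ω, R ω * (if A ω = (if gm1 ω ≤ g1 ω then (1 : ℝ) else -1) then (1 : ℝ) else 0) /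
          (if A ω = 1 then π1 ω else πm1 ω) ∂μ) := by
  have hπ1pos : ∀ ω, 0 < π1 ω := fun ω => lt_of_lt_of_le hc0 (hb1 ω).1
  have hπm1pos : ∀ ω, 0 < πm1 ω := fun ω => lt_of_lt_of_le hc0 (hbm1 ω).1
  have hπ1ne : ∀ ω, π1 ω ≠ 0 := fun ω => ne_of_gt (hπ1pos ω)
  have hπm1ne : ∀ ω, πm1 ω ≠ 0 := fun ω => ne_of_gt (hπm1pos ω)
  have hA0 : Measurable[m0] A := hA
  have hR0 : Measurable[m0] R := hR
  have hAm : ∀ c : ℝ, Measurable[m0] (fun ω => if A ω = c then (1 : ℝ) else 0) := fun c =>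
    Measurable.ite (hA0 (measurableSet_singleton c)) measurable_const measurable_const
  have hfint : ∀ c : ℝ, Integrable (fun ω => R ω * (if A ω = c then (1 : ℝ) else 0)) μ := by
    intro c
    refine Integrable.mono' hRint.norm ((hR0.mul (hAm c)).aestronglyMeasurable) ?_
    filter_upwards with ω
    rw [norm_mul]
    have h : ‖if A ω = c then (1:ℝ) else 0‖ ≤ 1 := by split <;> simp
    calc ‖R ω‖ * ‖if A ω = c then (1:ℝ) else 0‖ ≤ ‖R ω‖ * 1 :=
          mul_le_mul_of_nonneg_left h (norm_nonneg _)
      _ = ‖R ω‖ := mul_one _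
  -- the key evaluation, part 1
  have key : ∀ D : Ω → ℝ, Measurable[m] D → (∀ ω, D ω = 1 ∨ D ω = -1) →
      (∫ ω, R ω * (if A ω = D ω then (1 : ℝ) else 0) /
          (if A ω = 1 then π1 ω else πm1 ω) ∂μ)
        = ∫ ω, (g1 ω * (if D ω = 1 then (1 : ℝ) else 0)
            + gm1 ω * (if D ω = -1 then (1 : ℝ) else 0)) ∂μ := by
    intro D hD hDv
    set φ1 : Ω → ℝ := fun ω => (if D ω = 1 then (1:ℝ) else 0) / π1 ω with hφ1def
    set φm1 : Ω → ℝ := fun ω => (if D ω = -1 then (1:ℝ) else 0) / πm1 ω with hφm1def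
    have hφ1 : Measurable[m] φ1 :=
      (Measurable.ite (hD (measurableSet_singleton 1)) measurable_const measurable_const).div hπ1
    have hφm1 : Measurable[m] φm1 :=
      (Measurable.ite (hD (measurableSet_singleton (-1))) measurable_const measurable_const).div hπm1
    have hbφ : ∀ (ψ : Ω → ℝ) (c : ℝ), (∀ ω, 0 < ψ ω) → (∀ ω, c0 ≤ ψ ω) →
        ∀ ω, ‖(if D ω = c then (1:ℝ) else 0) / ψ ω‖ ≤ 1 / c0 := by
      intro ψ c hpos hc ω
      rw [norm_div, Real.norm_of_nonneg (le_of_lt (hpos ω))]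
      have h1 : ‖if D ω = c then (1:ℝ) else 0‖ ≤ 1 := by split <;> simp
      have h2 : (1:ℝ) / ψ ω ≤ 1 / c0 := by
        apply one_div_le_one_div_of_le hc0 (hc ω)
      calc ‖if D ω = c then (1:ℝ) else 0‖ / ψ ω ≤ 1 / ψ ω := by
            gcongr
            exact le_of_lt (hpos ω)
        _ ≤ 1 / c0 := h2
    have hbφ1 : ∀ ω, ‖φ1 ω‖ ≤ 1 / c0 := hbφ π1 1 hπ1pos (fun ω => (hb1 ω).1)
    have hbφm1 : ∀ ω, ‖φm1 ω‖ ≤ 1 / c0 := hbφ πm1 (-1) hπm1pos (fun ω => (hbm1 ω).1)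
    have hφ10 : Measurable[m0] φ1 := fun s hs => hm _ (hφ1 hs)
    have hφm10 : Measurable[m0] φm1 := fun s hs => hm _ (hφm1 hs)
    have hne1 : (1:ℝ) ≠ -1 := by norm_num
    -- pointwise decomposition
    have hpt : ∀ ω, R ω * (if A ω = D ω then (1 : ℝ) else 0) /
          (if A ω = 1 then π1 ω else πm1 ω)
        = φ1 ω * (R ω * (if A ω = 1 then (1:ℝ) else 0))
          + φm1 ω * (R ω * (if A ω = -1 then (1:ℝ) else 0)) := by
      intro ω
      rcases hAvals ω with hAω | hAω <;> rcases hDv ω with hDω | hDω <;>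
        simp [hφ1def, hφm1def, hAω, hDω, hne1, hne1.symm] <;>
        field_simp
    have hint1 : Integrable (fun ω => φ1 ω * (R ω * (if A ω = 1 then (1:ℝ) else 0))) μ :=
      (hfint 1).bdd_mul hφ10.aestronglyMeasurable (Filter.Eventually.of_forall hbφ1)
    have hintm1 : Integrable (fun ω => φm1 ω * (R ω * (if A ω = -1 then (1:ℝ) else 0))) μ :=
      (hfint (-1)).bdd_mul hφm10.aestronglyMeasurable (Filter.Eventually.of_forall hbφm1)
    have hg1πint : Integrable (fun ω => g1 ω * π1 ω) μ := integrable_condExp.congr hg1cond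
    have hgm1πint : Integrable (fun ω => gm1 ω * πm1 ω) μ := integrable_condExp.congr hgm1cond
    have hintg1 : Integrable (fun ω => φ1 ω * (g1 ω * π1 ω)) μ :=
      hg1πint.bdd_mul hφ10.aestronglyMeasurable (Filter.Eventually.of_forall hbφ1)
    have hintgm1 : Integrable (fun ω => φm1 ω * (gm1 ω * πm1 ω)) μ :=
      hgm1πint.bdd_mul hφm10.aestronglyMeasurable (Filter.Eventually.of_forall hbφm1)
    have hstep1 := my_integral_mul_condexp (m0 := m0) hm (hfint 1) hφ1 hbφ1
    have hstepm1 := my_integral_mul_condexp (m0 := m0) hm (hfint (-1)) hφm1 hbφm1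
    have hpt2 : ∀ ω, φ1 ω * (g1 ω * π1 ω) + φm1 ω * (gm1 ω * πm1 ω)
        = g1 ω * (if D ω = 1 then (1 : ℝ) else 0)
            + gm1 ω * (if D ω = -1 then (1 : ℝ) else 0) := by
      intro ω
      simp only [hφ1def, hφm1def]
      rcases hDv ω with h | h <;>
        simp [h, hne1, hne1.symm, mul_div_assoc, div_self (hπ1ne ω), div_self (hπm1ne ω)] <;>
        rw [inv_mul_eq_div, mul_div_assoc, div_self] <;> simp [hπ1ne ω, hπm1ne ω]
    calc (∫ ω, R ω * (if A ω = D ω then (1 : ℝ) else 0) /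
          (if A ω = 1 then π1 ω else πm1 ω) ∂μ)
        = ∫ ω, (φ1 ω * (R ω * (if A ω = 1 then (1:ℝ) else 0))
            + φm1 ω * (R ω * (if A ω = -1 then (1:ℝ) else 0))) ∂μ :=
          integral_congr_ae (Filter.Eventually.of_forall hpt)
      _ = (∫ ω, φ1 ω * (R ω * (if A ω = 1 then (1:ℝ) else 0)) ∂μ)
            + ∫ ω, φm1 ω * (R ω * (if A ω = -1 then (1:ℝ) else 0)) ∂μ :=
          integral_add hint1 hintm1
      _ = (∫ ω, φ1 ω * (g1 ω * π1 ω) ∂μ) + ∫ ω, φm1 ω * (gm1 ω * πm1 ω) ∂μ := by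
          rw [hstep1, hstepm1]
          congr 1
          · exact integral_congr_ae ((Filter.EventuallyEq.refl _ φ1).mul hg1cond)
          · exact integral_congr_ae ((Filter.EventuallyEq.refl _ φm1).mul hgm1cond)
      _ = ∫ ω, (φ1 ω * (g1 ω * π1 ω) + φm1 ω * (gm1 ω * πm1 ω)) ∂μ :=
          (integral_add hintg1 hintgm1).symm
      _ = ∫ ω, (g1 ω * (if D ω = 1 then (1 : ℝ) else 0)
            + gm1 ω * (if D ω = -1 then (1 : ℝ) else 0)) ∂μ :=
          integral_congr_ae (Filter.Eventually.of_forall hpt2)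
  -- integrability of g1, gm1
  have hπ10 : Measurable[m0] π1 := fun s hs => hm _ (hπ1 hs)
  have hπm10 : Measurable[m0] πm1 := fun s hs => hm _ (hπm1 hs)
  have hg1int : Integrable g1 μ := by
    have h1 : Integrable (fun ω => (π1 ω)⁻¹ * (g1 ω * π1 ω)) μ := by
      refine (integrable_condExp.congr hg1cond).bdd_mul (c := c0⁻¹) ?_ (Filter.Eventually.of_forall ?_)
      · exact hπ10.inv.aestronglyMeasurable
      · intro ω
        rw [norm_inv, Real.norm_of_nonneg (le_of_lt (hπ1pos ω))]
        exact inv_anti₀ hc0 (hb1 ω).1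
    refine h1.congr (Filter.Eventually.of_forall fun ω => ?_)
    show (π1 ω)⁻¹ * (g1 ω * π1 ω) = g1 ω
    rw [inv_mul_eq_div, mul_div_assoc, div_self (hπ1ne ω), mul_one]
  have hgm1int : Integrable gm1 μ := by
    have h1 : Integrable (fun ω => (πm1 ω)⁻¹ * (gm1 ω * πm1 ω)) μ := by
      refine (integrable_condExp.congr hgm1cond).bdd_mul (c := c0⁻¹) ?_ (Filter.Eventually.of_forall ?_)
      · exact hπm10.inv.aestronglyMeasurable
      · intro ω
        rw [norm_inv, Real.norm_of_nonneg (le_of_lt (hπm1pos ω))]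
        exact inv_anti₀ hc0 (hbm1 ω).1
    refine h1.congr (Filter.Eventually.of_forall fun ω => ?_)
    show (πm1 ω)⁻¹ * (gm1 ω * πm1 ω) = gm1 ω
    rw [inv_mul_eq_div, mul_div_assoc, div_self (hπm1ne ω), mul_one]
  have hvalint : ∀ D : Ω → ℝ, Measurable[m] D →
      Integrable (fun ω => g1 ω * (if D ω = 1 then (1 : ℝ) else 0)
            + gm1 ω * (if D ω = -1 then (1 : ℝ) else 0)) μ := by
    intro D hD
    have hD0 : Measurable[m0] D := fun s hs => hm _ (hD hs)
    have hi : ∀ (c : ℝ) (g : Ω → ℝ), Integrable g μ →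
        Integrable (fun ω => g ω * (if D ω = c then (1 : ℝ) else 0)) μ := by
      intro c g hg
      have h := hg.bdd_mul
        (Measurable.ite (hD0 (measurableSet_singleton c)) measurable_const
          measurable_const).aestronglyMeasurable
        (Filter.Eventually.of_forall (fun ω => by split <;> simp) :
          ∀ᵐ ω ∂μ, ‖if D ω = c then (1:ℝ) else 0‖ ≤ 1)
      exact h.congr (Filter.Eventually.of_forall fun ω => mul_comm _ _)
    exact (hi 1 g1 hg1int).add (hi (-1) gm1 hgm1int)
  refine ⟨key, ?_⟩
  intro D hD hDv
  have hDsm : Measurable[m] (fun ω => if gm1 ω ≤ g1 ω then (1:ℝ) else -1) :=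
    Measurable.ite (measurableSet_le hgm1 hg1) measurable_const measurable_const
  have hDsv : ∀ ω, (if gm1 ω ≤ g1 ω then (1:ℝ) else -1) = 1 ∨
      (if gm1 ω ≤ g1 ω then (1:ℝ) else -1) = -1 := by
    intro ω; split; exacts [Or.inl rfl, Or.inr rfl]
  rw [key D hD hDv, key _ hDsm hDsv]
  refine integral_mono (hvalint D hD) (hvalint _ hDsm) ?_
  intro ω
  have hne1 : (1:ℝ) ≠ -1 := by norm_num
  dsimp only
  by_cases hle : gm1 ω ≤ g1 ω <;> rcases hDv ω with h | h <;>
    simp [hle, h, hne1, hne1.symm] <;> linarith [le_of_not_ge hle]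
end

section
/- Let (H,A,R̃) be as in a single-stage trial with A ∈ {-1,1}, π(a,h)=P(A=a|H=h) bounded away from 0 and 1, and s a measurable function of H with R̃ − s(H) integrable. Then for every measurable rule f (with D(h)=sign(f(h))), E[ ((R̃−s(H))/π(A,H)) · 1{A ≠ sign(f(H))} ] = E[ (|R̃−s(H)|/π(A,H)) · 1{ A·sign(R̃−s(H)) ≠ sign(f(H)) } ] − E[ (R̃−s(H))⁻ / π(A,H) ], where x⁻ = max(−x, 0). Hence minimizing the left-hand side over rules is equivalent to minimizing the first term on the right-hand side. -/
open MeasureTheory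

noncomputable def sgn (x : ℝ) : ℝ := if 0 < x then 1 else -1

lemma sgn_meas : Measurable sgn := by
  unfold sgn
  exact Measurable.ite (measurableSet_lt measurable_const measurable_id)
    measurable_const measurable_const

lemma sgn_vals (x : ℝ) : sgn x = 1 ∨ sgn x = -1 := by
  unfold sgn; split <;> simp

lemma key_pt (w p a t : ℝ) (ha : a = 1 ∨ a = -1) (ht : t = 1 ∨ t = -1) :
    (|w| / p) * (if a * sgn w = t then (0 : ℝ) else 1)
      = (w / p) * (if a = t then (0 : ℝ) else 1) + max (-w) 0 / p := by
  unfold sgn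
  by_cases hw : 0 < w
  · rw [if_pos hw, abs_of_pos hw, mul_one, max_eq_right (by linarith)]
    simp
  · push_neg at hw
    rw [if_neg (not_lt.mpr hw), abs_of_nonpos hw, max_eq_left (by linarith)]
    rcases ha with ha | ha <;> rcases ht with ht | ht <;> subst ha <;> subst ht <;>
      norm_num [neg_div]

/-- With W = R̃ − s(H) and sign(0) = ... fixed (sgn x ∈ {-1,1}),
E[(W/π)·1{A ≠ sign(f(H))}] = E[(|W|/π)·1{A·sign(W) ≠ sign(f(H))}] − E[W⁻/π],
so minimizing the left side over rules f is equivalent to minimizing the first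
right-hand term. Here m = σ(H), s is m-measurable, and π(A,H) ∈ (c0,c1). -/
theorem stmt4
    {Ω : Type*} (m : MeasurableSpace Ω) [m0 : MeasurableSpace Ω] {μ : Measure Ω} [IsProbabilityMeasure μ]
    (hm : m ≤ m0)
    (A : Ω → ℝ) (hA : Measurable A) (hAvals : ∀ ω, A ω = 1 ∨ A ω = -1)
    (Rt : Ω → ℝ) (s : Ω → ℝ) (hs : Measurable[m] s)
    (hWint : Integrable (fun ω => Rt ω - s ω) μ)
    (π1 πm1 : Ω → ℝ) (hπ1 : Measurable[m] π1) (hπm1 : Measurable[m] πm1)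
    (c0 c1 : ℝ) (hc0 : 0 < c0) (hc1 : c1 < 1)
    (hb1 : ∀ ω, c0 ≤ π1 ω ∧ π1 ω ≤ c1) (hbm1 : ∀ ω, c0 ≤ πm1 ω ∧ πm1 ω ≤ c1)
    (hcond1 : μ[(fun ω => if A ω = 1 then (1 : ℝ) else 0) | m] =ᵐ[μ] π1)
    (hcondm1 : μ[(fun ω => if A ω = -1 then (1 : ℝ) else 0) | m] =ᵐ[μ] πm1) :
    (∀ f : Ω → ℝ, Measurable[m] f →
      (∫ ω, ((Rt ω - s ω) / (if A ω = 1 then π1 ω else πm1 ω)) *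
          (if A ω = sgn (f ω) then (0 : ℝ) else 1) ∂μ)
        = (∫ ω, (|Rt ω - s ω| / (if A ω = 1 then π1 ω else πm1 ω)) *
            (if A ω * sgn (Rt ω - s ω) = sgn (f ω) then (0 : ℝ) else 1) ∂μ)
          - ∫ ω, max (-(Rt ω - s ω)) 0 / (if A ω = 1 then π1 ω else πm1 ω) ∂μ) ∧
    (∀ f : Ω → ℝ, Measurable[m] f →
      ((∀ g : Ω → ℝ, Measurable[m] g →
          (∫ ω, ((Rt ω - s ω) / (if A ω = 1 then π1 ω else πm1 ω)) *
              (if A ω = sgn (f ω) then (0 : ℝ) else 1) ∂μ)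
            ≤ ∫ ω, ((Rt ω - s ω) / (if A ω = 1 then π1 ω else πm1 ω)) *
              (if A ω = sgn (g ω) then (0 : ℝ) else 1) ∂μ)
        ↔ (∀ g : Ω → ℝ, Measurable[m] g →
          (∫ ω, (|Rt ω - s ω| / (if A ω = 1 then π1 ω else πm1 ω)) *
              (if A ω * sgn (Rt ω - s ω) = sgn (f ω) then (0 : ℝ) else 1) ∂μ)
            ≤ ∫ ω, (|Rt ω - s ω| / (if A ω = 1 then π1 ω else πm1 ω)) *
              (if A ω * sgn (Rt ω - s ω) = sgn (g ω) then (0 : ℝ) else 1) ∂μ))) := by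
  set p : Ω → ℝ := fun ω => if A ω = 1 then π1 ω else πm1 ω with hp
  have hA' : Measurable[m0] A := hA
  have hπ1' : Measurable[m0] π1 := hπ1.mono hm le_rfl
  have hπm1' : Measurable[m0] πm1 := hπm1.mono hm le_rfl
  have hpmeas : Measurable[m0] p := by
    apply Measurable.ite _ hπ1' hπm1'
    exact hA' (measurableSet_singleton 1)
  have hpbound : ∀ ω, c0 ≤ p ω := by
    intro ω; simp only [hp]; split
    · exact (hb1 ω).1
    · exact (hbm1 ω).1
  -- integrability of the negative part term
  have hdom : Integrable (fun ω => |Rt ω - s ω| / c0) μ := hWint.abs.div_const c0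
  have hint2 : Integrable (fun ω => max (-(Rt ω - s ω)) 0 / p ω) μ := by
    refine Integrable.mono hdom ?_ (ae_of_all _ fun ω => ?_)
    · exact (((hWint.aemeasurable.neg.max aemeasurable_const).div
        (hpmeas.aemeasurable (μ := μ))).aestronglyMeasurable)
    · have h1 : max (-(Rt ω - s ω)) 0 ≤ |Rt ω - s ω| := by
        rw [max_le_iff]; constructor
        · exact (neg_le_abs _)
        · exact abs_nonneg _
      have h2 : (0:ℝ) ≤ max (-(Rt ω - s ω)) 0 := le_max_right _ _
      rw [Real.norm_eq_abs, Real.norm_eq_abs,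
        abs_of_nonneg (div_nonneg h2 (by linarith [hpbound ω])),
        abs_of_nonneg (div_nonneg (abs_nonneg _) hc0.le)]
      exact div_le_div₀ (abs_nonneg _) h1 hc0 (hpbound ω)
  -- integrability of the LHS integrand
  have hintL : ∀ f : Ω → ℝ, Measurable[m] f →
      Integrable (fun ω => ((Rt ω - s ω) / p ω) *
        (if A ω = sgn (f ω) then (0 : ℝ) else 1)) μ := by
    intro f hf
    have hind : Measurable[m0] (fun ω => if A ω = sgn (f ω) then (0 : ℝ) else 1) := by
      apply Measurable.ite _ measurable_const measurable_const
      have hf' : Measurable[m0] f := hf.mono hm le_rfl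
      exact measurableSet_eq_fun hA' (sgn_meas.comp hf')
    refine Integrable.mono hdom ?_ (ae_of_all _ fun ω => ?_)
    · exact ((hWint.aemeasurable.div (hpmeas.aemeasurable (μ := μ))).mul
        (hind.aemeasurable (μ := μ))).aestronglyMeasurable
    · have hi : |if A ω = sgn (f ω) then (0 : ℝ) else 1| ≤ 1 := by
        split <;> norm_num
      rw [Real.norm_eq_abs, Real.norm_eq_abs, abs_mul, abs_div,
        abs_of_nonneg (div_nonneg (abs_nonneg _) hc0.le),
        abs_of_nonneg (by linarith [hpbound ω] : (0:ℝ) ≤ p ω)]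
      calc |Rt ω - s ω| / p ω * |if A ω = sgn (f ω) then (0 : ℝ) else 1|
          ≤ |Rt ω - s ω| / p ω * 1 := by
            apply mul_le_mul_of_nonneg_left hi
            exact div_nonneg (abs_nonneg _) (by linarith [hpbound ω])
        _ = |Rt ω - s ω| / p ω := mul_one _
        _ ≤ |Rt ω - s ω| / c0 := div_le_div₀ (abs_nonneg _) le_rfl hc0 (hpbound ω)
  -- the key integral identity
  have key : ∀ f : Ω → ℝ, Measurable[m] f →
      (∫ ω, ((Rt ω - s ω) / p ω) * (if A ω = sgn (f ω) then (0 : ℝ) else 1) ∂μ)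
        = (∫ ω, (|Rt ω - s ω| / p ω) *
            (if A ω * sgn (Rt ω - s ω) = sgn (f ω) then (0 : ℝ) else 1) ∂μ)
          - ∫ ω, max (-(Rt ω - s ω)) 0 / p ω ∂μ := by
    intro f hf
    have h1 : (∫ ω, (|Rt ω - s ω| / p ω) *
        (if A ω * sgn (Rt ω - s ω) = sgn (f ω) then (0 : ℝ) else 1) ∂μ)
        = ∫ ω, (((Rt ω - s ω) / p ω) * (if A ω = sgn (f ω) then (0 : ℝ) else 1)
            + max (-(Rt ω - s ω)) 0 / p ω) ∂μ := by
      apply integral_congr_ae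
      exact ae_of_all _ fun ω => key_pt _ _ _ _ (hAvals ω) (sgn_vals _)
    rw [integral_add (hintL f hf) hint2] at h1
    linarith
  refine ⟨key, fun f hf => ?_⟩
  constructor
  · intro h g hg
    have hh := h g hg
    rw [key f hf, key g hg] at hh
    linarith
  · intro h g hg
    have hh := h g hg
    rw [key f hf, key g hg]
    linarith
end

section
/- Fix nonnegative reals w₁ and w₋₁. Consider the function φ(α) = w₁·(1−α)⁺ + w₋₁·(1+α)⁺ for α ∈ ℝ, where x⁺ = max(x,0). If w₁ > w₋₁, then every minimizer α* of φ satisfies α* ≥ 1 (in particular sign(α*) = 1); if w₁ < w₋₁, then every minimizer satisfies α* ≤ −1 (sign(α*) = −1). In particular, the sign of any minimizer of the weighted hinge risk equals sign(w₁ − w₋₁) whenever w₁ ≠ w₋₁. -/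
/-- Pointwise Fisher consistency of the weighted hinge loss.
For nonnegative weights w₁, w₋₁ and φ(α) = w₁(1−α)⁺ + w₋₁(1+α)⁺:
if w₁ > w₋₁ every minimizer α* satisfies α* ≥ 1 (so its sign is +1);
if w₁ < w₋₁ every minimizer satisfies α* ≤ −1 (sign −1). -/
theorem stmt5 (w1 wm1 : ℝ) (hw1 : 0 ≤ w1) (hwm1 : 0 ≤ wm1) :
    (wm1 < w1 → ∀ α : ℝ,
      (∀ β : ℝ, w1 * max (1 - α) 0 + wm1 * max (1 + α) 0
          ≤ w1 * max (1 - β) 0 + wm1 * max (1 + β) 0) → 1 ≤ α) ∧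
    (w1 < wm1 → ∀ α : ℝ,
      (∀ β : ℝ, w1 * max (1 - α) 0 + wm1 * max (1 + α) 0
          ≤ w1 * max (1 - β) 0 + wm1 * max (1 + β) 0) → α ≤ -1) := by
  constructor
  · intro hlt α h
    by_contra hc
    push_neg at hc
    have h1 := h 1
    have e1 : max (1 - (1:ℝ)) 0 = 0 := by norm_num
    have e2 : max (1 + (1:ℝ)) 0 = 2 := by norm_num
    rw [e1, e2] at h1
    have ha : max (1 - α) 0 = 1 - α := max_eq_left (by linarith)
    rw [ha] at h1
    rcases le_or_gt 0 (1 + α) with hp | hp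
    · rw [max_eq_left hp] at h1; nlinarith
    · rw [max_eq_right hp.le] at h1; nlinarith
  · intro hlt α h
    by_contra hc
    push_neg at hc
    have h1 := h (-1)
    have e1 : max (1 - (-1:ℝ)) 0 = 2 := by norm_num
    have e2 : max (1 + (-1:ℝ)) 0 = 0 := by norm_num
    rw [e1, e2] at h1
    have ha : max (1 + α) 0 = 1 + α := max_eq_left (by linarith)
    rw [ha] at h1
    rcases le_or_gt 0 (1 - α) with hp | hp
    · rw [max_eq_left hp] at h1; nlinarith
    · rw [max_eq_right hp.le] at h1; nlinarith
end
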